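/- For constants λ > 0 and α > 1/2, the integral ∫₀^∞ e^{-2λu} u^{α-1} (τ+u)^{α-1} du equals (1/√π) Γ(α) (τ/(2λ))^{α-1/2} e^{λτ} K_{α-1/2}(λτ) for all τ > 0, where K_ν is the modified Bessel function of the second kind. -/

import Mathlib

/-!
The substitution `u = (τ/2)(s - 1)` turns the integral into
`e^{λτ} (τ/2)^{2α-1} ∫₁^∞ (s² - 1)^{α-1} e^{-xs} ds` with `x = λτ`, so the point is the
representation `∫₁^∞ (s² - 1)^{α-1} e^{-xs} ds = Γ(α)/√π (2/x)^{α-1/2} K_{α-1/2}(x)`.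

Substituting `w = (x/2) eᵗ` in the cosh-integral gives
`∫₀^∞ e^{-w - x²/(4w)} w^{ν-1} dw = 2 (x/2)^ν K_ν(x)`. For `ν = -1/2`, together with the elementary
value `K_{1/2}(x) = √(π/(2x)) e^{-x}`, this writes `e^{-xs}` as a `w`-integral in whose exponent
`s` appears only through `(xs)²`. After exchanging the order of integration (Tonelli: everything is
nonnegative), the `s`-integral is a Gamma integral in `s² - 1`, and the remaining `w`-integral is
the one above with `ν = α - 1/2`.
-/

open Real MeasureTheory

/-- Modified Bessel function of the second kind, via its integral representation. -/
noncomputable def besselK (ν x : ℝ) : ℝ :=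
  ∫ t in Set.Ioi (0 : ℝ), Real.exp (-x * Real.cosh t) * Real.cosh (ν * t)

open Set Filter Function

theorem besselK_neg (ν x : ℝ) : besselK (-ν) x = besselK ν x := by
  simp only [besselK, neg_mul, cosh_neg]

theorem integral_comp_sinh_Ioi {E : Type*} [NormedAddCommGroup E] [NormedSpace ℝ E]
    (g : ℝ → E) : ∫ t in Ioi 0, cosh t • g (sinh t) = ∫ u in Ioi 0, g u := by
  have himage : sinh '' Ioi 0 = Ioi 0 := by
    ext u
    constructor
    · rintro ⟨t, ht, rfl⟩
      exact sinh_pos_iff.2 ht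
    · exact fun hu => ⟨arsinh u, arsinh_pos_iff.2 hu, sinh_arsinh u⟩
  have hsubst := integral_image_eq_integral_abs_deriv_smul (measurableSet_Ioi (a := 0))
    (fun t _ => (hasDerivAt_sinh t).hasDerivWithinAt) sinh_injective.injOn g
  rw [himage] at hsubst
  simp only [hsubst, abs_of_pos (cosh_pos _)]

theorem integral_comp_exp {E : Type*} [NormedAddCommGroup E] [NormedSpace ℝ E]
    (g : ℝ → E) : ∫ t, exp t • g (exp t) = ∫ v in Ioi 0, g v := by
  rw [← range_exp, ← image_univ, integral_image_eq_integral_abs_deriv_smul MeasurableSet.univ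
    (fun t _ => (hasDerivAt_exp t).hasDerivWithinAt) exp_injective.injOn, setIntegral_univ]
  simp only [abs_of_pos (exp_pos _)]

theorem integral_Ioi_zero_eq_smul_integral_Ioi_one {E : Type*} [NormedAddCommGroup E]
    [NormedSpace ℝ E] (f : ℝ → E) {c : ℝ} (hc : 0 < c) :
    ∫ u in Ioi 0, f u = c • ∫ s in Ioi 1, f (c * (s - 1)) := by
  have himage : (fun s => c * (s - 1)) '' Ioi 1 = Ioi 0 := by
    ext u
    constructor
    · rintro ⟨s, hs, rfl⟩
      exact mul_pos hc (sub_pos.2 hs)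
    · intro hu
      refine ⟨u / c + 1, ?_, by field_simp; ring⟩
      have huc : 0 < u / c := div_pos hu hc
      simp only [mem_Ioi]
      linarith
  have hsubst := integral_image_eq_integral_abs_deriv_smul (measurableSet_Ioi (a := 1))
    (fun s _ => (((hasDerivAt_id' s).sub_const 1).const_mul c).hasDerivWithinAt)
    (fun p _ q _ h => by simpa [hc.ne'] using h) f
  rw [himage] at hsubst
  rw [hsubst, mul_one, abs_of_pos hc, integral_smul]

theorem besselK_one_half (x : ℝ) : besselK (1 / 2) x = √(π / (2 * x)) * exp (-x) := by
  have hscale := (integral_comp_mul_left_Ioi' (fun t => exp (-x * cosh t) * cosh (1 / 2 * t)) 0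
    two_pos).symm
  simp only [mul_zero, smul_eq_mul] at hscale
  have hcosh : ∀ v, exp (-x * cosh (2 * v)) = exp (-x) * exp (-(2 * x) * sinh v ^ 2) := by
    intro v
    rw [← exp_add, cosh_two_mul, cosh_sq]
    ring_nf
  calc besselK (1 / 2) x = 2 * ∫ v in Ioi 0, cosh v • (exp (-x) * exp (-(2 * x) * sinh v ^ 2)) := by
        rw [besselK, hscale]
        congr 1
        refine setIntegral_congr_fun measurableSet_Ioi fun v _ => ?_
        rw [hcosh, show 1 / 2 * (2 * v) = v by ring, smul_eq_mul]
        ring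
    _ = √(π / (2 * x)) * exp (-x) := by
        rw [integral_comp_sinh_Ioi (fun u => exp (-x) * exp (-(2 * x) * u ^ 2)),
          integral_const_mul, integral_gaussian_Ioi]
        ring

theorem one_add_sq_div_four_le_cosh (t : ℝ) : 1 + t ^ 2 / 4 ≤ cosh t := by
  rw [← cosh_abs, ← sq_abs, cosh_eq]
  linarith [quadratic_le_exp_of_nonneg (abs_nonneg t), add_one_le_exp (-|t|)]

theorem integrable_exp_mul_sub_mul_cosh (ν : ℝ) {x : ℝ} (hx : 0 < x) :
    Integrable fun t => exp (ν * t - x * cosh t) := by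
  have hgauss : Integrable fun t => exp (ν ^ 2 / x - x) * exp (-(x / 4) * (t - 2 * ν / x) ^ 2) :=
    ((integrable_exp_neg_mul_sq (by positivity)).comp_sub_right (2 * ν / x)).const_mul _
  refine hgauss.mono' (by fun_prop) (Eventually.of_forall fun t => ?_)
  rw [norm_of_nonneg (exp_pos _).le, ← exp_add, exp_le_exp]
  have hquad : ν ^ 2 / x - x + -(x / 4) * (t - 2 * ν / x) ^ 2 = ν * t - x * (1 + t ^ 2 / 4) := by
    field_simp
    ring
  nlinarith [one_add_sq_div_four_le_cosh t]

theorem integral_exp_mul_sub_mul_cosh (ν : ℝ) {x : ℝ} (hx : 0 < x) :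
    ∫ t, exp (ν * t - x * cosh t) = 2 * besselK ν x := by
  have hint := integrable_exp_mul_sub_mul_cosh ν hx
  have hint_neg : Integrable fun t => exp (ν * -t - x * cosh (-t)) := hint.comp_neg
  have hsymm : ∀ t, (exp (ν * t - x * cosh t) + exp (ν * -t - x * cosh (-t))) / 2
      = exp (-x * cosh |t|) * cosh (ν * |t|) := by
    intro t
    rcases abs_choice t with h | h <;>
    · simp only [h, cosh_neg, mul_neg, cosh_eq (ν * t), sub_eq_add_neg, exp_add, neg_mul]
      ring
  calc ∫ t, exp (ν * t - x * cosh t)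
      = ((∫ t, exp (ν * t - x * cosh t)) + ∫ t, exp (ν * -t - x * cosh (-t))) / 2 := by
        have hneg : ∫ t, exp (ν * -t - x * cosh (-t)) = ∫ t, exp (ν * t - x * cosh t) :=
          integral_neg_eq_self (fun t => exp (ν * t - x * cosh t)) volume
        rw [hneg]
        ring
    _ = ∫ t, (exp (ν * t - x * cosh t) + exp (ν * -t - x * cosh (-t))) / 2 := by
        rw [integral_div, integral_add hint hint_neg]
    _ = ∫ t, exp (-x * cosh |t|) * cosh (ν * |t|) := by
        simp only [hsymm]
    _ = 2 * besselK ν x := integral_comp_abs (f := fun t => exp (-x * cosh t) * cosh (ν * t))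

theorem integral_exp_neg_sub_div_mul_rpow (ν : ℝ) {x : ℝ} (hx : 0 < x) :
    ∫ w in Ioi 0, exp (-w - x ^ 2 / (4 * w)) * w ^ (ν - 1) = 2 * (x / 2) ^ ν * besselK ν x := by
  have hx2 : 0 < x / 2 := half_pos hx
  have hpt : ∀ t, exp t • (exp (-(x / 2 * exp t) - x ^ 2 / (4 * (x / 2 * exp t)))
      * (x / 2 * exp t) ^ (ν - 1)) = (x / 2) ^ (ν - 1) * exp (ν * t - x * cosh t) := by
    intro t
    rw [mul_rpow hx2.le (exp_pos t).le, ← exp_mul, smul_eq_mul, cosh_eq,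
      show x ^ 2 / (4 * (x / 2 * exp t)) = x / 2 * exp (-t) by rw [exp_neg]; field_simp; ring,
      show ν * t - x * ((exp t + exp (-t)) / 2)
        = t + (-(x / 2 * exp t) - x / 2 * exp (-t)) + t * (ν - 1) by ring, exp_add, exp_add]
    ring
  have hpow : x / 2 * (x / 2) ^ (ν - 1) = (x / 2) ^ ν := by
    conv_rhs => rw [show ν = 1 + (ν - 1) by ring]
    rw [rpow_add hx2, rpow_one]
  have hscale := integral_comp_mul_left_Ioi' (fun w => exp (-w - x ^ 2 / (4 * w)) * w ^ (ν - 1))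
    0 hx2
  rw [mul_zero] at hscale
  rw [← hscale, smul_eq_mul, ← integral_comp_exp]
  simp only [hpt, integral_const_mul, integral_exp_mul_sub_mul_cosh ν hx]
  rw [← hpow]
  ring

theorem integral_exp_neg_sub_div_mul_rpow_neg_three_halves {c : ℝ} (hc : 0 < c) :
    ∫ w in Ioi 0, exp (-w - c ^ 2 / (4 * w)) * w ^ (-1 / 2 - 1 : ℝ) = 2 * √π / c * exp (-c) := by
  rw [integral_exp_neg_sub_div_mul_rpow _ hc, neg_div, besselK_neg, besselK_one_half,
    rpow_neg (half_pos hc).le, ← sqrt_eq_rpow, sqrt_div' _ (by positivity : (0:ℝ) ≤ 2 * c)]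
  have hsqrt : √(c / 2) * √(2 * c) = c := by
    rw [← sqrt_mul (by positivity), show c / 2 * (2 * c) = c ^ 2 by ring, sqrt_sq hc.le]
  field_simp
  linarith

theorem integral_mul_sq_sub_one_rpow_mul_exp {α a : ℝ} (hα : 0 < α) (ha : 0 < a) :
    ∫ s in Ioi 1, s * (s ^ 2 - 1) ^ (α - 1) * exp (-(a * (s ^ 2 - 1)))
      = (1 / a) ^ α * Gamma α / 2 := by
  have himage : (fun s : ℝ => s ^ 2 - 1) '' Ioi 1 = Ioi 0 := by
    ext q
    constructor
    · rintro ⟨s, hs, rfl⟩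
      exact sub_pos.2 (one_lt_pow₀ (mem_Ioi.1 hs) two_ne_zero)
    · intro hq
      refine ⟨√(q + 1), ?_, ?_⟩
      · rw [mem_Ioi, lt_sqrt zero_le_one]
        linarith [mem_Ioi.1 hq]
      · simp only [sq_sqrt (by linarith [mem_Ioi.1 hq] : (0:ℝ) ≤ q + 1), add_sub_cancel_right]
  have hinj : InjOn (fun s : ℝ => s ^ 2 - 1) (Ioi 1) := fun p hp q hq hpq => by
    nlinarith [mem_Ioi.1 hp, mem_Ioi.1 hq, sub_eq_sub_iff_add_eq_add.1 hpq]
  have hsubst := integral_image_eq_integral_abs_deriv_smul measurableSet_Ioi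
    (fun s _ => ((hasDerivAt_pow 2 s).sub_const 1).hasDerivWithinAt) hinj
    (fun q => q ^ (α - 1) * exp (-(a * q)))
  rw [himage, integral_rpow_mul_exp_neg_mul_Ioi hα ha] at hsubst
  have hpt : ∀ s ∈ Ioi (1:ℝ), |(2:ℕ) * s ^ (2 - 1)| • ((s ^ 2 - 1) ^ (α - 1) * exp (-(a * (s ^ 2 - 1))))
      = 2 * (s * (s ^ 2 - 1) ^ (α - 1) * exp (-(a * (s ^ 2 - 1)))) := by
    intro s hs
    rw [smul_eq_mul, abs_of_pos (by have := mem_Ioi.1 hs; positivity)]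
    push_cast
    ring
  rw [setIntegral_congr_fun measurableSet_Ioi hpt, integral_const_mul] at hsubst
  rw [hsubst]
  ring

theorem integral_integral_swap_of_nonneg {α β : Type*} [MeasurableSpace α] [MeasurableSpace β]
    {μ : Measure α} {ν : Measure β} [SFinite μ] [SFinite ν] {f : α → β → ℝ}
    (hf : AEStronglyMeasurable (uncurry f) (μ.prod ν)) (hf₀ : 0 ≤ᵐ[μ.prod ν] uncurry f)
    (hx : ∀ᵐ x ∂μ, Integrable (f x) ν) (hy : ∀ᵐ y ∂ν, Integrable (fun x => f x y) μ) :
    ∫ x, ∫ y, f x y ∂ν ∂μ = ∫ y, ∫ x, f x y ∂μ ∂ν := by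
  by_cases hint : Integrable (uncurry f) (μ.prod ν)
  · exact integral_integral_swap hint
  have hx₀ : ∀ᵐ x ∂μ, ∀ᵐ y ∂ν, 0 ≤ f x y := Measure.ae_ae_of_ae_prod hf₀
  have hy₀ : ∀ᵐ y ∂ν, ∀ᵐ x ∂μ, 0 ≤ f x y :=
    Measure.ae_ae_of_ae_prod ((Measure.measurePreserving_swap.quasiMeasurePreserving).ae hf₀)
  rw [integral_undef, integral_undef]
  · rw [integrable_prod_iff' hf] at hint
    refine fun h => hint ⟨hy, h.congr ?_⟩
    filter_upwards [hy₀] with y hy using integral_congr_ae <| by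
      filter_upwards [hy] with x hx using (Real.norm_of_nonneg hx).symm
  · rw [integrable_prod_iff hf] at hint
    refine fun h => hint ⟨hx, h.congr ?_⟩
    filter_upwards [hx₀] with x hx using integral_congr_ae <| by
      filter_upwards [hx] with y hy using (Real.norm_of_nonneg hy).symm

/-- `(s² - 1)^{α-1} e^{-xs}` with the factor `e^{-xs}` unfolded into a `w`-integral by
`integral_exp_neg_sub_div_mul_rpow_neg_three_halves`. -/
noncomputable def doubleIntegrand (α x s w : ℝ) : ℝ :=
  x * s / (2 * √π) * (s ^ 2 - 1) ^ (α - 1) *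
    (exp (-w - (x * s) ^ 2 / (4 * w)) * w ^ (-1 / 2 - 1 : ℝ))

theorem measurable_doubleIntegrand (α x : ℝ) : Measurable (uncurry (doubleIntegrand α x)) := by
  unfold doubleIntegrand
  fun_prop

theorem doubleIntegrand_nonneg {α x s w : ℝ} (hx : 0 ≤ x) (hs : 1 ≤ s) (hw : 0 ≤ w) :
    0 ≤ doubleIntegrand α x s w := by
  have hpow := rpow_nonneg (sub_nonneg.2 (one_le_pow₀ hs) : (0:ℝ) ≤ s ^ 2 - 1) (α - 1)
  have hs0 : 0 ≤ s := zero_le_one.trans hs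
  unfold doubleIntegrand
  positivity

theorem integral_doubleIntegrand_Ioi_zero (α : ℝ) {x s : ℝ} (hx : 0 < x) (hs : 0 < s) :
    ∫ w in Ioi 0, doubleIntegrand α x s w = (s ^ 2 - 1) ^ (α - 1) * exp (-(x * s)) := by
  simp only [doubleIntegrand, integral_const_mul]
  rw [integral_exp_neg_sub_div_mul_rpow_neg_three_halves (mul_pos hx hs)]
  field_simp

theorem integral_doubleIntegrand_Ioi_one {α x w : ℝ} (hα : 0 < α) (hx : 0 < x) (hw : 0 < w) :
    ∫ s in Ioi 1, doubleIntegrand α x s w = Gamma α / (2 * √π) * (x / 2) * ((2 / x) ^ 2) ^ α *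
      (exp (-w - x ^ 2 / (4 * w)) * w ^ (α - 1 / 2 - 1)) := by
  have hfactor : ∀ s, doubleIntegrand α x s w
      = x / (2 * √π) * exp (-w - x ^ 2 / (4 * w)) * w ^ (-1 / 2 - 1 : ℝ) *
        (s * (s ^ 2 - 1) ^ (α - 1) * exp (-(x ^ 2 / (4 * w) * (s ^ 2 - 1)))) := by
    intro s
    rw [doubleIntegrand, show -w - (x * s) ^ 2 / (4 * w)
      = (-w - x ^ 2 / (4 * w)) + -(x ^ 2 / (4 * w) * (s ^ 2 - 1)) by ring, exp_add]
    ring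
  have hinv : 1 / (x ^ 2 / (4 * w)) = (2 / x) ^ 2 * w := by
    field_simp
    ring
  simp only [hfactor, integral_const_mul]
  rw [integral_mul_sq_sub_one_rpow_mul_exp hα (by positivity), hinv,
    mul_rpow (by positivity) hw.le, show α - 1 / 2 - 1 = (-1 / 2 - 1) + α by ring, rpow_add hw]
  ring

theorem integral_sq_sub_one_rpow_mul_exp {α x : ℝ} (hα : 0 < α) (hx : 0 < x) :
    ∫ s in Ioi 1, (s ^ 2 - 1) ^ (α - 1) * exp (-(x * s))
      = Gamma α / √π * (2 / x) ^ (α - 1 / 2) * besselK (α - 1 / 2) x := by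
  set C := Gamma α / (2 * √π) * (x / 2) * ((2 / x) ^ 2) ^ α
  have hC : 0 < C := by
    have := Gamma_pos_of_pos hα
    positivity
  have hnonneg : 0 ≤ᵐ[(volume.restrict (Ioi 1)).prod (volume.restrict (Ioi 0))]
      uncurry (doubleIntegrand α x) := by
    rw [Measure.prod_restrict]
    filter_upwards [ae_restrict_mem (measurableSet_Ioi.prod measurableSet_Ioi)] with ⟨s, w⟩ ⟨hs, hw⟩
    exact doubleIntegrand_nonneg hx.le (le_of_lt hs) (le_of_lt hw)
  -- the slice integrals are nonzero, which forces integrability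
  have hslice_w : ∀ᵐ s ∂volume.restrict (Ioi 1),
      Integrable (doubleIntegrand α x s) (volume.restrict (Ioi 0)) := by
    filter_upwards [ae_restrict_mem measurableSet_Ioi] with s (hs : 1 < s)
    refine .of_integral_ne_zero ?_
    rw [integral_doubleIntegrand_Ioi_zero α hx (zero_lt_one.trans hs)]
    exact (mul_pos (rpow_pos_of_pos (sub_pos.2 (one_lt_pow₀ hs two_ne_zero)) _) (exp_pos _)).ne'
  have hslice_s : ∀ᵐ w ∂volume.restrict (Ioi 0),
      Integrable (fun s => doubleIntegrand α x s w) (volume.restrict (Ioi 1)) := by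
    filter_upwards [ae_restrict_mem measurableSet_Ioi] with w (hw : 0 < w)
    refine .of_integral_ne_zero ?_
    rw [integral_doubleIntegrand_Ioi_one hα hx hw]
    positivity
  have hpow : x / 2 * ((2 / x) ^ 2) ^ α * (x / 2) ^ (α - 1 / 2) = (2 / x) ^ (α - 1 / 2) := by
    have hz : 0 < 2 / x := by positivity
    rw [show x / 2 = (2 / x) ^ (-1 : ℝ) by rw [rpow_neg_one, inv_div], ← rpow_natCast,
      ← rpow_mul hz.le, ← rpow_mul hz.le, ← rpow_add hz, ← rpow_add hz]
    norm_num
    ring_nf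
  calc ∫ s in Ioi 1, (s ^ 2 - 1) ^ (α - 1) * exp (-(x * s))
      = ∫ s in Ioi 1, ∫ w in Ioi 0, doubleIntegrand α x s w :=
        (setIntegral_congr_fun measurableSet_Ioi fun s (hs : 1 < s) =>
          integral_doubleIntegrand_Ioi_zero α hx (zero_lt_one.trans hs)).symm
    _ = ∫ w in Ioi 0, ∫ s in Ioi 1, doubleIntegrand α x s w :=
        integral_integral_swap_of_nonneg (measurable_doubleIntegrand α x).aestronglyMeasurable
          hnonneg hslice_w hslice_s
    _ = C * ∫ w in Ioi 0, exp (-w - x ^ 2 / (4 * w)) * w ^ (α - 1 / 2 - 1) := by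
        rw [setIntegral_congr_fun measurableSet_Ioi fun w (hw : 0 < w) =>
          integral_doubleIntegrand_Ioi_one hα hx hw, integral_const_mul]
    _ = Gamma α / √π * (2 / x) ^ (α - 1 / 2) * besselK (α - 1 / 2) x := by
        rw [integral_exp_neg_sub_div_mul_rpow _ hx, ← hpow]
        simp only [C]
        field_simp

theorem integral_exp_mul_rpow_mul_add_rpow (lam α : ℝ) {τ : ℝ} (hτ : 0 < τ) :
    ∫ u in Ioi 0, exp (-2 * lam * u) * u ^ (α - 1) * (τ + u) ^ (α - 1)
      = τ / 2 * (((τ / 2) ^ 2) ^ (α - 1) * exp (lam * τ)) *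
        ∫ s in Ioi 1, (s ^ 2 - 1) ^ (α - 1) * exp (-(lam * τ * s)) := by
  have hτ2 : 0 < τ / 2 := half_pos hτ
  have hpt : ∀ s ∈ Ioi (1:ℝ), exp (-2 * lam * (τ / 2 * (s - 1))) * (τ / 2 * (s - 1)) ^ (α - 1)
      * (τ + τ / 2 * (s - 1)) ^ (α - 1)
      = ((τ / 2) ^ 2) ^ (α - 1) * exp (lam * τ) * ((s ^ 2 - 1) ^ (α - 1) * exp (-(lam * τ * s))) := by
    intro s (hs : 1 < s)
    have hs1 : 0 < s - 1 := sub_pos.2 hs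
    have hpow : (τ / 2 * (s - 1)) ^ (α - 1) * (τ + τ / 2 * (s - 1)) ^ (α - 1)
        = ((τ / 2) ^ 2) ^ (α - 1) * (s ^ 2 - 1) ^ (α - 1) := by
      rw [← mul_rpow (by positivity) (by positivity), ← mul_rpow (by positivity) (by nlinarith)]
      ring_nf
    have hexp : exp (-2 * lam * (τ / 2 * (s - 1))) = exp (lam * τ) * exp (-(lam * τ * s)) := by
      rw [← exp_add]
      ring_nf
    rw [mul_assoc, hpow, hexp]
    ring
  rw [integral_Ioi_zero_eq_smul_integral_Ioi_one _ hτ2, setIntegral_congr_fun measurableSet_Ioi hpt,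
    integral_const_mul, smul_eq_mul]
  ring

theorem stmt0 (lam α τ : ℝ) (hlam : 0 < lam) (hα : 1/2 < α) (hτ : 0 < τ) :
    ∫ u in Set.Ioi (0 : ℝ),
        Real.exp (-2 * lam * u) * u ^ (α - 1) * (τ + u) ^ (α - 1)
      = (1 / Real.sqrt π) * Real.Gamma α * (τ / (2 * lam)) ^ (α - 1/2) *
          Real.exp (lam * τ) * besselK (α - 1/2) (lam * τ) := by
  have hscale : τ / 2 * ((τ / 2) ^ 2) ^ (α - 1) * (2 / (lam * τ)) ^ (α - 1 / 2)
      = (τ / (2 * lam)) ^ (α - 1 / 2) := by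
    have hhalf : ((τ / 2) ^ 2) ^ (α - 1 / 2) = τ / 2 * ((τ / 2) ^ 2) ^ (α - 1) := by
      rw [show α - 1 / 2 = 1 / 2 + (α - 1) by ring, rpow_add (by positivity), ← sqrt_eq_rpow,
        sqrt_sq (half_pos hτ).le]
    rw [← hhalf, ← mul_rpow (by positivity) (by positivity)]
    congr 1
    field_simp
  rw [integral_exp_mul_rpow_mul_add_rpow lam α hτ,
    integral_sq_sub_one_rpow_mul_exp (by linarith) (mul_pos hlam hτ), ← hscale]
  ring
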